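/- arXiv:2112.12675 — 3 statements merged into one kernel-verified Lean document; each statement's English description precedes it below -/
import Mathlib

section
/- Let (Ω, μ) be a probability space, ρ a real number with 0 < ρ < 1/2, and (X_i)_{i∈ℕ} an i.i.d. sequence of random variables taking values in {−1, 1} with μ(X_i = 1) = ρ. Set S_n = 1 + ∑_{i<n} X_i and T = inf{n ∈ ℕ : S_n = 0} (with T = ∞ if no such n exists). Then for every natural number k, μ(T = 2k+1) = ((2k)!/(k!·(k+1)!))·ρ^k·(1−ρ)^{k+1}, and μ(T = 2k) = 0 for every k ≥ 1. -/
open MeasureTheory ProbabilityTheory DyckStep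

namespace HittingTimeAux


def bval (b : Bool) : ℤ := if b then 1 else -1

lemma bval_cases (b : Bool) : bval b = 1 ∨ bval b = -1 := by cases b <;> simp [bval]

def extf {n : ℕ} (b : Fin n → Bool) (i : ℕ) : ℤ :=
  if h : i < n then bval (b ⟨i, h⟩) else 0

def psum {n : ℕ} (b : Fin n → Bool) (m : ℕ) : ℤ :=
  ∑ i ∈ Finset.range m, extf b i

lemma psum_succ {n : ℕ} (b : Fin n → Bool) (m : ℕ) :
    psum b (m + 1) = psum b m + extf b m := Finset.sum_range_succ _ _

lemma extf_cases {n : ℕ} (b : Fin n → Bool) {i : ℕ} (h : i < n) :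
    extf b i = 1 ∨ extf b i = -1 := by
  simp only [extf, dif_pos h]; exact bval_cases _

lemma neg_one_le_extf {n : ℕ} (b : Fin n → Bool) (i : ℕ) : -1 ≤ extf b i := by
  unfold extf; split
  · rcases bval_cases (b ⟨i, ‹_›⟩) with h | h <;> omega
  · omega

lemma psum_pos {n : ℕ} {b : Fin n → Bool} (h : ∀ m < n, 1 + psum b m ≠ 0) :
    ∀ m < n, 0 < 1 + psum b m := by
  intro m hm
  induction m with
  | zero => simp [psum]
  | succ m ih =>
    have hm' : m < n := Nat.lt_of_succ_lt hm
    have h1 := ih hm'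
    have h2 := h (m + 1) hm
    have h3 := neg_one_le_extf b m
    rw [psum_succ] at h2 ⊢
    omega

def tU {n : ℕ} (b : Fin n → Bool) (m : ℕ) : ℕ :=
  ((Finset.range m).filter fun i => extf b i = 1).card

def tD {n : ℕ} (b : Fin n → Bool) (m : ℕ) : ℕ :=
  ((Finset.range m).filter fun i => extf b i = -1).card

lemma filter_not_eq {n : ℕ} (b : Fin n → Bool) {m : ℕ} (hm : m ≤ n) :
    ((Finset.range m).filter fun i => ¬ extf b i = 1)
      = ((Finset.range m).filter fun i => extf b i = -1) := by
  apply Finset.filter_congr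
  intro i hi
  have := extf_cases b (lt_of_lt_of_le (Finset.mem_range.mp hi) hm)
  constructor
  · intro h2
    rcases this with h3 | h3
    · exact absurd h3 h2
    · exact h3
  · intro h2 h3
    rw [h3] at h2
    exact absurd h2 (by norm_num)

lemma tU_add_tD {n : ℕ} (b : Fin n → Bool) {m : ℕ} (hm : m ≤ n) :
    tU b m + tD b m = m := by
  rw [tU, tD, ← filter_not_eq b hm,
    Finset.card_filter_add_card_filter_not, Finset.card_range]

lemma psum_eq_counts {n : ℕ} (b : Fin n → Bool) {m : ℕ} (hm : m ≤ n) :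
    psum b m = (tU b m : ℤ) - (tD b m : ℤ) := by
  rw [psum, ← Finset.sum_filter_add_sum_filter_not (Finset.range m) (fun i => extf b i = 1),
    filter_not_eq b hm]
  rw [Finset.sum_congr rfl (fun i hi => (Finset.mem_filter.mp hi).2),
    Finset.sum_congr (s₂ := (Finset.range m).filter fun i => extf b i = -1) rfl
      (fun i hi => (Finset.mem_filter.mp hi).2)]
  simp only [tU, tD, Finset.sum_const, nsmul_eq_mul, mul_one, mul_neg_one]
  ring

def wlist (k : ℕ) (b : Fin (2*k+1) → Bool) : List DyckStep :=
  List.ofFn fun i : Fin (2*k) => if b i.castSucc then U else D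

lemma length_wlist (k : ℕ) (b : Fin (2*k+1) → Bool) : (wlist k b).length = 2*k :=
  List.length_ofFn

lemma getElem_wlist (k : ℕ) (b : Fin (2*k+1) → Bool) (m : ℕ) (hm : m < 2*k) :
    (wlist k b)[m]'(by rw [length_wlist]; exact hm)
      = if b ⟨m, by omega⟩ then U else D := by
  simp only [wlist, List.getElem_ofFn]
  congr 1

lemma extf_lt {k : ℕ} (b : Fin (2*k+1) → Bool) {m : ℕ} (hm : m < 2*k+1) :
    extf b m = bval (b ⟨m, hm⟩) := dif_pos hm

lemma tU_succ {n : ℕ} (b : Fin n → Bool) (m : ℕ) :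
    tU b (m+1) = tU b m + (if extf b m = 1 then 1 else 0) := by
  unfold tU
  rw [Finset.range_add_one, Finset.filter_insert]
  split
  · rw [Finset.card_insert_of_notMem (by simp)]
  · simp

lemma tD_succ {n : ℕ} (b : Fin n → Bool) (m : ℕ) :
    tD b (m+1) = tD b m + (if extf b m = -1 then 1 else 0) := by
  unfold tD
  rw [Finset.range_add_one, Finset.filter_insert]
  split
  · rw [Finset.card_insert_of_notMem (by simp)]
  · simp

lemma count_take (k : ℕ) (b : Fin (2*k+1) → Bool) :
    ∀ m ≤ 2*k, ((wlist k b).take m).count U = tU b m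
      ∧ ((wlist k b).take m).count D = tD b m := by
  intro m hm
  induction m with
  | zero => simp [tU, tD]
  | succ m ih =>
    have hm' : m < 2*k := hm
    obtain ⟨ihU, ihD⟩ := ih (le_of_lt hm')
    have hlen : m < (wlist k b).length := by rw [length_wlist]; exact hm'
    rw [List.take_succ, List.getElem?_eq_getElem hlen, getElem_wlist k b m hm']
    have hext : extf b m = bval (b ⟨m, by omega⟩) := extf_lt b (by omega)
    rw [tU_succ, tD_succ, hext]
    cases hb : b ⟨m, by omega⟩ <;>
      simp [hb, bval, List.count_append, ihU, ihD, List.count_singleton]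

lemma psum_zero {n : ℕ} (b : Fin n → Bool) : psum b 0 = 0 := by simp [psum]

def Vset (k : ℕ) : Finset (Fin (2*k+1) → Bool) :=
  Finset.univ.filter fun b =>
    (∀ m < 2*k+1, 1 + psum b m ≠ 0) ∧ 1 + psum b (2*k+1) = 0

lemma mem_Vset {k : ℕ} {b : Fin (2*k+1) → Bool} :
    b ∈ Vset k ↔ (∀ m < 2*k+1, 1 + psum b m ≠ 0) ∧ 1 + psum b (2*k+1) = 0 := by
  simp [Vset]

lemma Vset_psum_2k {k : ℕ} {b : Fin (2*k+1) → Bool} (hb : b ∈ Vset k) :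
    psum b (2*k) = 0 ∧ extf b (2*k) = -1 := by
  obtain ⟨h1, h2⟩ := mem_Vset.mp hb
  have hpos := psum_pos h1 (2*k) (by omega)
  have hsucc := psum_succ b (2*k)
  have hε := extf_cases b (show 2*k < 2*k+1 by omega)
  omega

lemma Vset_psum_nonneg {k : ℕ} {b : Fin (2*k+1) → Bool} (hb : b ∈ Vset k) :
    ∀ m ≤ 2*k, 0 ≤ psum b m := by
  intro m hm
  obtain ⟨h1, _⟩ := mem_Vset.mp hb
  rcases Nat.lt_or_ge m (2*k+1) with h | h
  · have := psum_pos h1 m h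
    have hpar : psum b m ≠ -1 := by
      intro hc
      exact h1 m h (by omega)
    omega
  · omega

lemma Vset_counts {k : ℕ} {b : Fin (2*k+1) → Bool} (hb : b ∈ Vset k) :
    tU b (2*k) = k ∧ tD b (2*k) = k := by
  have h0 := (Vset_psum_2k hb).1
  have hc := psum_eq_counts b (show 2*k ≤ 2*k+1 by omega)
  have ha := tU_add_tD b (show 2*k ≤ 2*k+1 by omega)
  omega

lemma take_wlist_all (k : ℕ) (b : Fin (2*k+1) → Bool) :
    (wlist k b).take (2*k) = wlist k b := by
  rw [← length_wlist k b]
  exact List.take_length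

/-- The Dyck word associated to a first-passage path. -/
def W {k : ℕ} (b : Fin (2*k+1) → Bool) (hb : b ∈ Vset k) : DyckWord where
  toList := wlist k b
  count_U_eq_count_D := by
    have h := count_take k b (2*k) le_rfl
    rw [take_wlist_all] at h
    rw [h.1, h.2, (Vset_counts hb).1, (Vset_counts hb).2]
  count_D_le_count_U := by
    intro i
    rcases le_or_gt i (2*k) with h | h
    · have hc := count_take k b i h
      rw [hc.1, hc.2]
      have := Vset_psum_nonneg hb i h
      have := psum_eq_counts b (show i ≤ 2*k+1 by omega)
      omega
    · rw [List.take_of_length_le (by rw [length_wlist]; omega)]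
      have hc := count_take k b (2*k) le_rfl
      rw [take_wlist_all] at hc
      rw [hc.1, hc.2, (Vset_counts hb).1, (Vset_counts hb).2]

lemma W_semilength {k : ℕ} (b : Fin (2*k+1) → Bool) (hb : b ∈ Vset k) :
    (W b hb).semilength = k := by
  show (wlist k b).count U = k
  have h := count_take k b (2*k) le_rfl
  rw [take_wlist_all] at h
  rw [h.1, (Vset_counts hb).1]

/-- Inverse: from a Dyck word to a sign vector. -/
def binv (k : ℕ) (p : DyckWord) : Fin (2*k+1) → Bool :=
  fun i => if h : (i : ℕ) < p.toList.length then decide (p.toList[(i : ℕ)] = U) else false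

lemma wlist_binv {k : ℕ} (p : DyckWord) (hp : p.semilength = k) :
    wlist k (binv k p) = p.toList := by
  have hlen : p.toList.length = 2*k := by
    rw [← p.two_mul_semilength_eq_length, hp]
  apply List.ext_getElem
  · rw [length_wlist, hlen]
  · intro m h1 h2
    rw [getElem_wlist k _ m (by rwa [length_wlist] at h1)]
    have hm : m < p.toList.length := h2
    simp only [binv, Fin.coe_castSucc]
    rw [dif_pos hm]
    rcases (p.toList[m]).dichotomy with h | h <;> simp [h]

lemma binv_mem {k : ℕ} (p : DyckWord) (hp : p.semilength = k) :
    binv k p ∈ Vset k := by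
  have hlen : p.toList.length = 2*k := by
    rw [← p.two_mul_semilength_eq_length, hp]
  have hw := wlist_binv p hp
  have hcount : ∀ m ≤ 2*k, (p.toList.take m).count U = tU (binv k p) m
      ∧ (p.toList.take m).count D = tD (binv k p) m := by
    intro m hm
    rw [← hw]
    exact count_take k _ m hm
  have hps : ∀ m ≤ 2*k, 0 ≤ psum (binv k p) m := by
    intro m hm
    obtain ⟨hU2, hD2⟩ := hcount m hm
    have := p.count_D_le_count_U m
    have := psum_eq_counts (binv k p) (show m ≤ 2*k+1 by omega)
    omega
  have hp2k : psum (binv k p) (2*k) = 0 := by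
    obtain ⟨hU2, hD2⟩ := hcount (2*k) le_rfl
    have htake : p.toList.take (2*k) = p.toList := by
      rw [← hlen]; exact List.take_length
    rw [htake] at hU2 hD2
    have := p.count_U_eq_count_D
    have := psum_eq_counts (binv k p) (show 2*k ≤ 2*k+1 by omega)
    omega
  have hlast : extf (binv k p) (2*k) = -1 := by
    rw [extf_lt (binv k p) (show 2*k < 2*k+1 by omega)]
    simp only [binv]
    rw [dif_neg (by omega)]
    rfl
  rw [mem_Vset]
  constructor
  · intro m hm
    have := hps m (by omega)
    have hpar : psum (binv k p) m ≠ -1 := by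
      have := hps m (by omega)
      omega
    omega
  · rw [psum_succ, hp2k, hlast]
    ring

lemma binv_W {k : ℕ} (b : Fin (2*k+1) → Bool) (hb : b ∈ Vset k) :
    binv k (W b hb) = b := by
  have hlen : (W b hb).toList.length = 2*k := length_wlist k b
  funext i
  rcases Nat.lt_or_ge (i : ℕ) (2*k) with h | h
  · simp only [binv, hlen]
    rw [dif_pos h]
    have : (W b hb).toList[(i:ℕ)]'(by omega) = if b ⟨(i:ℕ), by omega⟩ then U else D :=
      getElem_wlist k b (i:ℕ) h
    rw [this]
    have : (⟨(i:ℕ), by omega⟩ : Fin (2*k+1)) = i := Fin.ext rfl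
    rw [this]
    cases b i <;> simp
  · have hi : (i : ℕ) = 2*k := by omega
    have hlast := (Vset_psum_2k hb).2
    rw [extf_lt b (show 2*k < 2*k+1 by omega)] at hlast
    have hb2k : b ⟨2*k, by omega⟩ = false := by
      cases hbb : b ⟨2*k, by omega⟩
      · rfl
      · rw [hbb] at hlast; simp [bval] at hlast
    have hieq : i = ⟨2*k, by omega⟩ := Fin.ext hi
    simp only [binv, hlen]
    rw [dif_neg (by omega), hieq, hb2k]

lemma card_Vset (k : ℕ) : (Vset k).card = catalan k := by
  rw [← DyckWord.card_dyckWord_semilength_eq_catalan, ← Finset.card_univ]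
  exact Finset.card_bij'
    (i := fun b hb => (⟨W b hb, W_semilength b hb⟩ : {p : DyckWord // p.semilength = k}))
    (j := fun p _ => binv k p.1)
    (hi := fun b hb => Finset.mem_univ _)
    (hj := fun p _ => binv_mem p.1 p.2)
    (left_inv := fun b hb => binv_W b hb)
    (right_inv := fun p _ => Subtype.ext (DyckWord.ext (wlist_binv p.1 p.2)))



lemma catalan_real (k : ℕ) :
    ((2*k).factorial : ℝ) / ((k.factorial : ℝ) * ((k+1).factorial : ℝ)) = (catalan k : ℝ) := by
  have h1 : (k+1) * catalan k = Nat.centralBinom k := succ_mul_catalan_eq_centralBinom _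
  have h2 : (2*k).choose k * k.factorial * (2*k - k).factorial = (2*k).factorial :=
    Nat.choose_mul_factorial_mul_factorial (by omega)
  have h3 : catalan k * (k.factorial * (k+1).factorial) = (2*k).factorial := by
    have h4 : (2*k - k) = k := by omega
    rw [h4] at h2
    rw [← h2, ← Nat.centralBinom, ← h1, Nat.factorial_succ]
    ring
  have hpos : (0:ℝ) < (k.factorial : ℝ) * ((k+1).factorial : ℝ) := by
    positivity
  rw [div_eq_iff (ne_of_gt hpos)]
  exact_mod_cast h3.symm

lemma sInf_image_eq {A : Set ℕ} {n : ℕ} :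
    sInf ((fun m : ℕ => (m : ℕ∞)) '' A) = (n : ℕ∞) ↔ n ∈ A ∧ ∀ m < n, m ∉ A := by
  constructor
  · intro h
    rcases A.eq_empty_or_nonempty with hA | hA
    · rw [hA, Set.image_empty, sInf_empty] at h
      exact absurd h.symm (ENat.coe_ne_top n)
    · have hmem : sInf A ∈ A := Nat.sInf_mem hA
      have heq : sInf ((fun m : ℕ => (m : ℕ∞)) '' A) = ((sInf A : ℕ) : ℕ∞) := by
        refine le_antisymm (sInf_le ⟨_, hmem, rfl⟩) (le_sInf ?_)
        rintro x ⟨m, hm, rfl⟩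
        simp only []
        exact_mod_cast Nat.sInf_le hm
      rw [heq] at h
      have hn : sInf A = n := by exact_mod_cast h
      refine ⟨hn ▸ hmem, fun m hm hmem' => ?_⟩
      exact Nat.notMem_of_lt_sInf (hn ▸ hm) hmem'
  · rintro ⟨hn, hlt⟩
    refine le_antisymm (sInf_le ⟨n, hn, rfl⟩) (le_sInf ?_)
    rintro x ⟨m, hm, rfl⟩
    have : n ≤ m := le_of_not_gt fun h => hlt m h hm
    simp only []
    exact_mod_cast this

lemma parity_ne {Ω : Type*} (X : ℕ → Ω → ℤ) (hval : ∀ i ω, X i ω = 1 ∨ X i ω = -1)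
    (ω : Ω) (k : ℕ) : 1 + ∑ i ∈ Finset.range (2*k), X i ω ≠ 0 := by
  intro hc
  have hz : ((1 + ∑ i ∈ Finset.range (2*k), X i ω : ℤ) : ZMod 2) = 0 := by
    rw [hc]; exact Int.cast_zero
  rw [Int.cast_add, Int.cast_one, Int.cast_sum] at hz
  have heach : ∀ i ∈ Finset.range (2*k), ((X i ω : ℤ) : ZMod 2) = 1 := by
    intro i _
    rcases hval i ω with h | h <;> rw [h] <;> decide
  rw [Finset.sum_congr rfl heach, Finset.sum_const, Finset.card_range,
    nsmul_eq_mul, mul_one] at hz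
  have h2 : ((2*k : ℕ) : ZMod 2) = 0 := by
    push_cast
    rw [show ((2:ZMod 2)) = 0 by decide, zero_mul]
  rw [h2, add_zero] at hz
  exact one_ne_zero hz


lemma Vset_counts' {k : ℕ} {b : Fin (2*k+1) → Bool} (hb : b ∈ Vset k) :
    tU b (2*k+1) = k ∧ tD b (2*k+1) = k+1 := by
  obtain ⟨-, h2⟩ := mem_Vset.mp hb
  have hc := psum_eq_counts b (le_refl (2*k+1))
  have ha := tU_add_tD b (le_refl (2*k+1))
  omega

variable {Ω : Type*} [MeasurableSpace Ω] (μ : Measure Ω) [IsProbabilityMeasure μ]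

lemma meas_eq_neg_one {ρ : ℝ} (h0 : 0 ≤ ρ) (X : Ω → ℤ) (hm : Measurable X)
    (hv : ∀ ω, X ω = 1 ∨ X ω = -1) (hl : μ {ω | X ω = 1} = ENNReal.ofReal ρ) :
    μ {ω | X ω = -1} = ENNReal.ofReal (1 - ρ) := by
  have hset : {ω | X ω = -1} = {ω | X ω = 1}ᶜ := by
    ext ω
    simp only [Set.mem_setOf_eq, Set.mem_compl_iff]
    rcases hv ω with h | h <;> simp [h]
  have hms : MeasurableSet {ω | X ω = 1} := hm (measurableSet_singleton 1)
  rw [hset, measure_compl hms (measure_ne_top μ _), hl, measure_univ,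
    ← ENNReal.ofReal_one, ← ENNReal.ofReal_sub _ h0]

def Cyl (X : ℕ → Ω → ℤ) (k : ℕ) (b : Fin (2*k+1) → Bool) : Set Ω :=
  ⋂ i ∈ Finset.range (2*k+1), {ω | X i ω = extf b i}

lemma measurableSet_Cyl (X : ℕ → Ω → ℤ) (hmeas : ∀ i, Measurable (X i))
    (k : ℕ) (b : Fin (2*k+1) → Bool) : MeasurableSet (Cyl X k b) :=
  Finset.measurableSet_biInter _ fun i _ => hmeas i (measurableSet_singleton (extf b i))

lemma cyl_measure {ρ : ℝ} (h0 : 0 ≤ ρ) (X : ℕ → Ω → ℤ)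
    (hmeas : ∀ i, Measurable (X i))
    (hval : ∀ i ω, X i ω = 1 ∨ X i ω = -1)
    (hindep : iIndepFun X μ)
    (hlaw : ∀ i, μ {ω | X i ω = 1} = ENNReal.ofReal ρ)
    {k : ℕ} {b : Fin (2*k+1) → Bool} (hb : b ∈ Vset k) :
    μ (Cyl X k b) = ENNReal.ofReal ρ ^ k * ENNReal.ofReal (1-ρ) ^ (k+1) := by
  have h1 : μ (Cyl X k b) = ∏ i ∈ Finset.range (2*k+1), μ {ω | X i ω = extf b i} := by
    refine hindep.meas_biInter fun i _ => ?_
    exact ⟨{extf b i}, measurableSet_singleton _, rfl⟩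
  have h2 : ∀ i ∈ Finset.range (2*k+1), μ {ω | X i ω = extf b i}
      = if extf b i = 1 then ENNReal.ofReal ρ else ENNReal.ofReal (1-ρ) := by
    intro i hi
    rcases extf_cases b (Finset.mem_range.mp hi) with h | h
    · rw [h, if_pos rfl]; exact hlaw i
    · rw [h, if_neg (by norm_num)]
      exact meas_eq_neg_one μ h0 (X i) (hmeas i) (fun ω => hval i ω) (hlaw i)
  rw [h1, Finset.prod_congr rfl h2, Finset.prod_ite, Finset.prod_const, Finset.prod_const,
    filter_not_eq b (le_refl (2*k+1))]
  rw [show ((Finset.range (2*k+1)).filter fun i => extf b i = 1).card = tU b (2*k+1) from rfl,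
    show ((Finset.range (2*k+1)).filter fun i => extf b i = -1).card = tD b (2*k+1) from rfl,
    (Vset_counts' hb).1, (Vset_counts' hb).2]

lemma event_eq (X : ℕ → Ω → ℤ) (hval : ∀ i ω, X i ω = 1 ∨ X i ω = -1) (k : ℕ) :
    {ω | sInf ((fun n : ℕ => (n : ℕ∞)) ''
        {n : ℕ | 1 + ∑ i ∈ Finset.range n, X i ω = 0}) = ((2 * k + 1 : ℕ) : ℕ∞)}
      = ⋃ b ∈ Vset k, Cyl X k b := by
  ext ω
  simp only [Set.mem_setOf_eq]
  rw [sInf_image_eq]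
  constructor
  · rintro ⟨h1, h2⟩
    set bv : Fin (2*k+1) → Bool := fun i => decide (X (i : ℕ) ω = 1) with hbv
    have hext : ∀ i < 2*k+1, extf bv i = X i ω := by
      intro i hi
      rw [extf, dif_pos hi]
      rcases hval i ω with h | h
      · simp [hbv, bval, h]
      · simp [hbv, bval, h]
    have hsum : ∀ m ≤ 2*k+1, psum bv m = ∑ i ∈ Finset.range m, X i ω := by
      intro m hm
      exact Finset.sum_congr rfl fun i hi =>
        hext i (lt_of_lt_of_le (Finset.mem_range.mp hi) hm)
    have hmemV : bv ∈ Vset k := by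
      rw [mem_Vset]
      constructor
      · intro m hm hc
        rw [hsum m (le_of_lt hm)] at hc
        exact h2 m hm hc
      · rw [hsum _ le_rfl]
        exact h1
    refine Set.mem_biUnion hmemV ?_
    exact Set.mem_iInter₂.mpr fun i hi => (hext i (Finset.mem_range.mp hi)).symm
  · intro hmem
    rw [Set.mem_iUnion₂] at hmem
    obtain ⟨b, hb, hω⟩ := hmem
    have hXi : ∀ i < 2*k+1, X i ω = extf b i := fun i hi =>
      Set.mem_iInter₂.mp hω i (Finset.mem_range.mpr hi)
    have hsum : ∀ m ≤ 2*k+1, ∑ i ∈ Finset.range m, X i ω = psum b m := by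
      intro m hm
      exact Finset.sum_congr rfl fun i hi =>
        hXi i (lt_of_lt_of_le (Finset.mem_range.mp hi) hm)
    obtain ⟨hb1, hb2⟩ := mem_Vset.mp hb
    constructor
    · rw [Set.mem_setOf_eq, hsum _ le_rfl]
      exact hb2
    · intro m hm hc
      rw [Set.mem_setOf_eq, hsum m (le_of_lt hm)] at hc
      exact hb1 m hm hc

lemma cyl_disjoint (X : ℕ → Ω → ℤ) (k : ℕ) :
    (↑(Vset k) : Set (Fin (2*k+1) → Bool)).PairwiseDisjoint (Cyl X k) := by
  intro b _ b' _ hne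
  rw [Function.onFun, Set.disjoint_left]
  intro ω hω hω'
  have hne' : ∃ i : Fin (2*k+1), b i ≠ b' i := by
    by_contra h
    push_neg at h
    exact hne (funext h)
  obtain ⟨i, hi⟩ := hne'
  have h1 : X (i : ℕ) ω = extf b (i : ℕ) :=
    Set.mem_iInter₂.mp hω (i : ℕ) (Finset.mem_range.mpr i.isLt)
  have h2 : X (i : ℕ) ω = extf b' (i : ℕ) :=
    Set.mem_iInter₂.mp hω' (i : ℕ) (Finset.mem_range.mpr i.isLt)
  rw [extf_lt b i.isLt] at h1
  rw [extf_lt b' i.isLt] at h2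
  rw [Fin.eta] at h1 h2
  apply hi
  have : bval (b i) = bval (b' i) := by rw [← h1, ← h2]
  cases hb : b i <;> cases hb' : b' i <;> simp_all [bval]


end HittingTimeAux

open HittingTimeAux

/-- For the jump chain `S_n = 1 + ∑_{i<n} X_i` of a subcritical
birth-death excursion (`X_i` i.i.d. with values in `{-1,1}` and
`μ(X_i = 1) = ρ`, `0 < ρ < 1/2`), the hitting time
`T = inf {n | S_n = 0}` (with `T = ∞` if the walk never hits `0`) satisfies
`μ(T = 2k+1) = ((2k)!/(k!(k+1)!)) ρ^k (1-ρ)^(k+1)` and `μ(T = 2k) = 0` for `k ≥ 1`. -/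
theorem hitting_time_distribution
    {Ω : Type*} [MeasurableSpace Ω] (μ : Measure Ω) [IsProbabilityMeasure μ]
    (ρ : ℝ) (h0 : 0 < ρ) (h1 : ρ < 1 / 2)
    (X : ℕ → Ω → ℤ)
    (hmeas : ∀ i, Measurable (X i))
    (hval : ∀ i ω, X i ω = 1 ∨ X i ω = -1)
    (hindep : iIndepFun X μ)
    (hlaw : ∀ i, μ {ω | X i ω = 1} = ENNReal.ofReal ρ) :
    (∀ k : ℕ,
      μ {ω | sInf ((fun n : ℕ => (n : ℕ∞)) ''
          {n : ℕ | 1 + ∑ i ∈ Finset.range n, X i ω = 0}) = ((2 * k + 1 : ℕ) : ℕ∞)} =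
        ENNReal.ofReal
          (((2 * k).factorial : ℝ) / ((k.factorial : ℝ) * ((k + 1).factorial : ℝ)) *
            ρ ^ k * (1 - ρ) ^ (k + 1))) ∧
    (∀ k : ℕ, 1 ≤ k →
      μ {ω | sInf ((fun n : ℕ => (n : ℕ∞)) ''
          {n : ℕ | 1 + ∑ i ∈ Finset.range n, X i ω = 0}) = ((2 * k : ℕ) : ℕ∞)} = 0) := by
  have h0' : (0:ℝ) ≤ ρ := le_of_lt h0
  have h1' : (0:ℝ) ≤ 1 - ρ := by linarith
  constructor
  · intro k
    rw [event_eq X hval k,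
      measure_biUnion_finset (cyl_disjoint X k) (fun b _ => measurableSet_Cyl X hmeas k b),
      Finset.sum_congr rfl (fun b hb => cyl_measure μ h0' X hmeas hval hindep hlaw hb),
      Finset.sum_const, card_Vset]
    have hc : (((2 * k).factorial : ℝ) / ((k.factorial : ℝ) * ((k + 1).factorial : ℝ)))
        = (catalan k : ℝ) := catalan_real k
    rw [hc]
    rw [ENNReal.ofReal_mul (by positivity), ENNReal.ofReal_mul (by positivity),
      ENNReal.ofReal_pow h0', ENNReal.ofReal_pow h1', ENNReal.ofReal_natCast,
      nsmul_eq_mul, mul_assoc]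
  · intro k hk
    have hempty : {ω | sInf ((fun n : ℕ => (n : ℕ∞)) ''
        {n : ℕ | 1 + ∑ i ∈ Finset.range n, X i ω = 0}) = ((2 * k : ℕ) : ℕ∞)} = ∅ := by
      rw [Set.eq_empty_iff_forall_notMem]
      intro ω h
      rw [Set.mem_setOf_eq, sInf_image_eq] at h
      exact parity_ne X hval ω k h.1
    rw [hempty, measure_empty]
end

section
/- Let (Ω, μ) be a probability space, ρ a real number with 0 < ρ < 1/2, and (X_i)_{i∈ℕ} an i.i.d. sequence of random variables taking values in {−1, 1} with μ(X_i = 1) = ρ. Set S_n = 1 + ∑_{i<n} X_i and T = inf{n ∈ ℕ : S_n = 0}. Then T is almost surely finite, the random variable Z = (T−1)/2 (the number of indices i < T with X_i = 1) is integrable, and its expectation equals λ(ρ) := ∑_{ℓ=1}^∞ ((2ℓ)!/((ℓ−1)!·(ℓ+1)!))·ρ^ℓ·(1−ρ)^{ℓ+1}. -/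
open MeasureTheory ProbabilityTheory


open List DyckStep

/-- Step of the walk: `true` is a birth (+1), `false` a death (-1). -/
def bstep (b : Bool) : ℤ := if b then 1 else -1

/-- Sum of steps of a boolean word. -/
def wsum (l : List Bool) : ℤ := (l.map bstep).sum

/-- First-hit word: the walk `1 + partial sums` hits 0 exactly at the end. -/
def FirstHit (l : List Bool) : Prop :=
  1 + wsum l = 0 ∧ ∀ k < l.length, 1 + wsum (l.take k) ≠ 0

@[simp] lemma wsum_nil : wsum [] = 0 := rfl
@[simp] lemma wsum_cons (b : Bool) (l : List Bool) : wsum (b :: l) = bstep b + wsum l := by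
  simp [wsum]

lemma wsum_append (l₁ l₂ : List Bool) : wsum (l₁ ++ l₂) = wsum l₁ + wsum l₂ := by
  simp [wsum]

lemma wsum_eq_count (l : List Bool) :
    wsum l = (l.count true : ℤ) - (l.count false : ℤ) := by
  induction l with
  | nil => simp
  | cons b t ih =>
      cases b <;> simp [ih, bstep, List.count_cons] <;> ring

/-- Discrete IVT: a ±1 walk starting at 1 that becomes ≤ 0 must hit 0. -/
lemma exists_hit_of_nonpos (w : ℕ → ℤ) (hw : ∀ i, w i = 1 ∨ w i = -1) {n : ℕ}
    (hn : 1 + ∑ i ∈ Finset.range n, w i ≤ 0) :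
    ∃ m ≤ n, 1 + ∑ i ∈ Finset.range m, w i = 0 := by
  classical
  set f : ℕ → ℤ := fun k => 1 + ∑ i ∈ Finset.range k, w i with hf
  have hne : ∃ k, f k ≤ 0 := ⟨n, hn⟩
  set m := Nat.find hne with hmdef
  have hm : f m ≤ 0 := Nat.find_spec hne
  have hmin : ∀ k < m, ¬ f k ≤ 0 := fun k hk => Nat.find_min hne hk
  have hmn : m ≤ n := Nat.find_le hn
  clear_value m
  have hm0 : m ≠ 0 := by
    rintro rfl
    simp [hf] at hm
  obtain ⟨m', rfl⟩ := Nat.exists_eq_succ_of_ne_zero hm0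
  replace hmin := hmin m' (Nat.lt_succ_self m')
  have hprev : 0 < f m' := lt_of_not_ge hmin
  have hstep : f (m' + 1) = f m' + w m' := by
    simp [hf, Finset.sum_range_succ]; ring
  refine ⟨m' + 1, hmn, ?_⟩
  show f (m' + 1) = 0
  simp only [Nat.succ_eq_add_one] at hm
  rcases hw m' with h | h <;> omega

lemma sum_range_bstep (l : List Bool) {k : ℕ} (hk : k ≤ l.length) :
    ∑ i ∈ Finset.range k, bstep (l.getD i true) = wsum (l.take k) := by
  induction l generalizing k with
  | nil => obtain rfl := Nat.le_zero.mp hk; simp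
  | cons b t ih =>
      cases k with
      | zero => simp
      | succ k' =>
          rw [Finset.sum_range_succ']
          simp only [List.getD_cons_succ, List.getD_cons_zero, List.take_succ_cons, wsum_cons]
          rw [ih (by simpa using hk)]; ring

/-- First-hit words have strictly positive walk before the end. -/
lemma FirstHit.pos {l : List Bool} (h : FirstHit l) :
    ∀ k < l.length, 0 < 1 + wsum (l.take k) := by
  intro k hk
  by_contra hle
  push_neg at hle
  have key : ∃ m ≤ k, 1 + ∑ i ∈ Finset.range m, bstep (l.getD i true) = 0 := by
    apply exists_hit_of_nonpos _ (fun i => by unfold bstep; split <;> simp)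
    rw [sum_range_bstep l hk.le]; omega
  obtain ⟨m, hmk, hm⟩ := key
  rw [sum_range_bstep l (le_trans hmk hk.le)] at hm
  exact h.2 m (lt_of_le_of_lt hmk hk) hm

def toD (b : Bool) : DyckStep := if b then U else D
def toB (s : DyckStep) : Bool := s = U

@[simp] lemma toB_toD (b : Bool) : toB (toD b) = b := by cases b <;> rfl
@[simp] lemma toD_toB (s : DyckStep) : toD (toB s) = s := by cases s <;> rfl

lemma toD_inj : Function.Injective toD := fun a b h => by cases a <;> cases b <;> simp_all [toD]
lemma toB_inj : Function.Injective toB := fun a b h => by cases a <;> cases b <;> simp_all [toB]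

@[simp] lemma count_U_map_toD (l : List Bool) : (l.map toD).count U = l.count true :=
  List.count_map_of_injective l toD toD_inj true
@[simp] lemma count_D_map_toD (l : List Bool) : (l.map toD).count D = l.count false :=
  List.count_map_of_injective l toD toD_inj false
@[simp] lemma count_true_map_toB (q : List DyckStep) : (q.map toB).count true = q.count U :=
  List.count_map_of_injective q toB toB_inj U
@[simp] lemma count_false_map_toB (q : List DyckStep) : (q.map toB).count false = q.count D :=
  List.count_map_of_injective q toB toB_inj D

lemma FirstHit.ne_nil {l : List Bool} (h : FirstHit l) : l ≠ [] := by
  rintro rfl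
  simpa using h.1

/-- For a first-hit word, the word without its last letter is balanced,
and the last letter is `false`. -/
lemma FirstHit.balanced {l : List Bool} (h : FirstHit l) :
    wsum l.dropLast = 0 ∧ l.getLast h.ne_nil = false := by
  have hne := h.ne_nil
  have hlen : 0 < l.length := List.length_pos_iff.mpr hne
  have hsplit : l = l.dropLast ++ [l.getLast hne] := (List.dropLast_append_getLast hne).symm
  have hdl : l.dropLast = l.take (l.length - 1) := by
    rw [List.dropLast_eq_take]
  have hpos : 0 < 1 + wsum (l.take (l.length - 1)) := h.pos _ (by omega)
  have hw : wsum l = wsum l.dropLast + bstep (l.getLast hne) := by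
    conv_lhs => rw [hsplit]
    simp [wsum_append]
  have h1 := h.1
  rw [hdl] at *
  have hb : l.getLast hne = false := by
    rcases Bool.dichotomy (l.getLast hne) with hb | hb
    · exact hb
    · rw [hb] at hw; simp [bstep] at hw; omega
  rw [hb] at hw
  simp [bstep] at hw
  exact ⟨by omega, hb⟩

lemma count_le_of_wsum_nonneg {x : List Bool} (h : 0 ≤ wsum x) :
    x.count false ≤ x.count true := by
  have := wsum_eq_count x; omega

/-- First-hit words of length `2n+1` are in bijection with Dyck words of semilength `n`. -/
def fhEquivDyck (n : ℕ) :
    {l : List Bool // FirstHit l ∧ l.length = 2 * n + 1} ≃ {p : DyckWord // p.semilength = n} where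
  toFun := fun x => by
    obtain ⟨l, hFH, hlen⟩ := x
    have hbal := hFH.balanced.1
    have hcnt : l.dropLast.count true = l.dropLast.count false := by
      have := wsum_eq_count l.dropLast; omega
    have hdlen : l.dropLast.length = 2 * n := by
      simp [List.length_dropLast, hlen]
    refine ⟨⟨l.dropLast.map toD, by rw [count_U_map_toD, count_D_map_toD, hcnt], ?_⟩, ?_⟩
    · intro i
      rw [← List.map_take]
      rcases le_or_gt (2 * n) i with hi | hi
      · rw [List.take_of_length_le (by omega), count_U_map_toD, count_D_map_toD, hcnt]
      · have htk : l.dropLast.take i = l.take i := by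
          rw [List.dropLast_eq_take, List.take_take, hlen]
          congr 1; omega
        rw [htk, count_U_map_toD, count_D_map_toD]
        exact count_le_of_wsum_nonneg (x := l.take i)
          (by have := hFH.pos i (by omega); omega)
    · show (l.dropLast.map toD).count U = n
      rw [count_U_map_toD]
      have hc2 := List.count_true_add_count_false l.dropLast
      omega
  invFun := fun x => by
    obtain ⟨p, hp⟩ := x
    have hplen : p.toList.length = 2 * n := by
      rw [← p.two_mul_semilength_eq_length, hp]
    refine ⟨p.toList.map toB ++ [false], ⟨?_, ?_⟩, by simp [hplen]⟩
    · rw [wsum_append, wsum_eq_count, count_true_map_toB, count_false_map_toB,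
        p.count_U_eq_count_D]
      simp [wsum, bstep]
    · intro k hk
      simp only [List.length_append, List.length_map, hplen, List.length_singleton] at hk
      have htk : (p.toList.map toB ++ [false]).take k = (p.toList.take k).map toB := by
        rw [List.take_append_of_le_length (by simp [hplen]; omega), List.map_take]
      rw [htk, wsum_eq_count, count_true_map_toB, count_false_map_toB]
      have := p.count_D_le_count_U k
      omega
  left_inv := fun x => by
    obtain ⟨l, hFH, hlen⟩ := x
    ext1
    show ((l.dropLast.map toD).map toB) ++ [false] = l
    rw [List.map_map]
    simp only [Function.comp_def, toB_toD, List.map_id']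
    conv_rhs => rw [← List.dropLast_append_getLast hFH.ne_nil]
    rw [hFH.balanced.2]
  right_inv := fun x => by
    obtain ⟨p, hp⟩ := x
    ext1; ext1
    show ((p.toList.map toB ++ [false]).dropLast).map toD = p.toList
    rw [List.dropLast_concat, List.map_map]
    simp [Function.comp_def]

instance fhFintype (n : ℕ) : Fintype {l : List Bool // FirstHit l ∧ l.length = 2 * n + 1} :=
  Fintype.ofEquiv _ (fhEquivDyck n).symm

lemma fh_card (n : ℕ) :
    Fintype.card {l : List Bool // FirstHit l ∧ l.length = 2 * n + 1} = catalan n := by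
  rw [Fintype.card_congr (fhEquivDyck n), DyckWord.card_dyckWord_semilength_eq_catalan]

lemma FirstHit.counts {l : List Bool} {n : ℕ} (h : FirstHit l) (hlen : l.length = 2 * n + 1) :
    l.count true = n ∧ l.count false = n + 1 := by
  have h1 := h.1
  have h2 := wsum_eq_count l
  have h3 := List.count_true_add_count_false l
  omega

lemma prod_ite_count {M : Type*} [CommMonoid M] (a b : M) (l : List Bool) :
    ∏ i ∈ Finset.range l.length, (if l.getD i true then a else b)
      = a ^ l.count true * b ^ l.count false := by
  induction l with
  | nil => simp
  | cons c t ih =>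
      rw [List.length_cons, Finset.prod_range_succ']
      simp only [List.getD_cons_succ, List.getD_cons_zero, List.count_cons]
      rw [ih]
      cases c <;> simp [pow_succ, mul_assoc, mul_comm, mul_left_comm]

open MeasureTheory ProbabilityTheory
open scoped ENNReal

section Walk

variable {Ω : Type*} [MeasurableSpace Ω] {μ : Measure Ω} [IsProbabilityMeasure μ]
  {ρ : ℝ} {X : ℕ → Ω → ℤ}

/-- The cylinder event determined by a word. -/
def cyl (X : ℕ → Ω → ℤ) (l : List Bool) : Set Ω :=
  ⋂ i ∈ Finset.range l.length, X i ⁻¹' {bstep (l.getD i true)}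

lemma cyl_mem_iff {l : List Bool} {ω : Ω} :
    ω ∈ cyl X l ↔ ∀ i < l.length, X i ω = bstep (l.getD i true) := by
  simp [cyl]

lemma measurableSet_cyl (hmeas : ∀ i, Measurable (X i)) (l : List Bool) :
    MeasurableSet (cyl X l) :=
  MeasurableSet.biInter (Finset.range l.length).countable_toSet
    fun i _ => (hmeas i) (measurableSet_singleton _)

lemma meas_eq_neg_one (hmeas : ∀ i, Measurable (X i)) (hval : ∀ i ω, X i ω = 1 ∨ X i ω = -1)
    (hlaw : ∀ i, μ {ω | X i ω = 1} = ENNReal.ofReal ρ) (i : ℕ) :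
    μ {ω | X i ω = -1} = 1 - ENNReal.ofReal ρ := by
  have hset : {ω | X i ω = -1} = {ω | X i ω = 1}ᶜ := by
    ext ω
    rcases hval i ω with h | h <;> simp [h]
  have h1m : MeasurableSet {ω | X i ω = 1} := (hmeas i) (measurableSet_singleton 1)
  rw [hset, measure_compl h1m (measure_ne_top μ _), hlaw i, measure_univ]

lemma meas_cyl (hmeas : ∀ i, Measurable (X i)) (hval : ∀ i ω, X i ω = 1 ∨ X i ω = -1)
    (hindep : iIndepFun X μ)
    (hlaw : ∀ i, μ {ω | X i ω = 1} = ENNReal.ofReal ρ) (l : List Bool) :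
    μ (cyl X l) = ENNReal.ofReal ρ ^ l.count true * (1 - ENNReal.ofReal ρ) ^ l.count false := by
  rw [cyl, hindep.meas_biInter
    (fun i _ => ⟨{bstep (l.getD i true)}, measurableSet_singleton _, rfl⟩)]
  rw [← prod_ite_count (ENNReal.ofReal ρ) (1 - ENNReal.ofReal ρ) l]
  refine Finset.prod_congr rfl fun i _ => ?_
  rcases Bool.dichotomy (l.getD i true) with hb | hb <;> rw [hb]
  · simpa [bstep, Set.preimage] using meas_eq_neg_one hmeas hval hlaw i
  · simpa [bstep, Set.preimage] using hlaw i

lemma cyl_disjoint (hval : ∀ i ω, X i ω = 1 ∨ X i ω = -1) {l l' : List Bool}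
    (hlen : l.length = l'.length) (hne : l ≠ l') :
    Disjoint (cyl X l) (cyl X l') := by
  rw [Set.disjoint_left]
  intro ω hω hω'
  apply hne
  apply List.ext_getElem hlen
  intro i hi hi'
  have h1 := cyl_mem_iff.mp hω i hi
  have h2 := cyl_mem_iff.mp hω' i hi'
  rw [List.getD_eq_getElem l true hi, List.getD_eq_getElem l' true hi'] at *
  have : bstep l[i] = bstep l'[i] := by omega
  rcases Bool.dichotomy l[i] with hb | hb <;> rcases Bool.dichotomy l'[i] with hb' | hb' <;>
    simp [hb, hb', bstep] at this ⊢

end Walk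

open scoped Classical in
/-- The finset of first-hit words of a given length. -/
noncomputable def FHS (n : ℕ) : Finset (List Bool) :=
  ((Finset.univ : Finset (Fin n → Bool)).image List.ofFn).filter FirstHit

lemma mem_FHS {n : ℕ} {l : List Bool} : l ∈ FHS n ↔ l.length = n ∧ FirstHit l := by
  classical
  simp only [FHS, Finset.mem_filter, Finset.mem_image, Finset.mem_univ, true_and]
  constructor
  · rintro ⟨⟨w, rfl⟩, h⟩
    exact ⟨List.length_ofFn, h⟩
  · rintro ⟨rfl, h⟩
    refine ⟨⟨fun i => l.getD i true, ?_⟩, h⟩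
    apply List.ext_getElem (by simp)
    intro i hi hi'
    simp [List.getD_eq_getElem l true hi']

lemma FHS_card (n : ℕ) : (FHS (2 * n + 1)).card = catalan n := by
  rw [← fh_card n, ← Fintype.card_coe]
  apply Fintype.card_congr
  exact Equiv.subtypeEquivRight fun l => by rw [mem_FHS]; tauto

section Walk2

variable {Ω : Type*} [MeasurableSpace Ω] {μ : Measure Ω} [IsProbabilityMeasure μ]
  {ρ : ℝ} {X : ℕ → Ω → ℤ}

lemma card_filter_range (N : ℕ) (p : ℕ → Prop) [DecidablePred p] :
    ((Finset.range N).filter p).card = ((List.range N).map (fun i => decide (p i))).count true := by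
  induction N with
  | zero => simp
  | succ n ih =>
      rw [Finset.range_add_one, Finset.filter_insert, List.range_succ, List.map_append,
        List.count_append]
      by_cases hp : p n
      · rw [if_pos hp, Finset.card_insert_of_notMem (by simp), ih]
        simp [hp]
      · rw [if_neg hp, ih]
        simp [hp]

/-- Decomposition of the event `Z = m + 1` into cylinders over first-hit words. -/
lemma Z_eq_decomp (hval : ∀ i ω, X i ω = 1 ∨ X i ω = -1) (Z : Ω → ℕ)
    (hZ : ∀ ω, Z ω =
      ((Finset.range (sInf {n : ℕ | 1 + ∑ i ∈ Finset.range n, X i ω = 0})).filter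
        (fun i => X i ω = 1)).card) (m : ℕ) :
    {ω | Z ω = m + 1} = ⋃ l ∈ FHS (2 * (m + 1) + 1), cyl X l := by
  classical
  have hXb : ∀ (ω : Ω) i, X i ω = bstep (decide (X i ω = 1)) := by
    intro ω i
    rcases hval i ω with h | h <;> simp [h, bstep]
  -- relation between walk sums and word sums
  have hsum : ∀ (ω : Ω) (l : List Bool), ω ∈ cyl X l → ∀ k ≤ l.length,
      1 + ∑ i ∈ Finset.range k, X i ω = 1 + wsum (l.take k) := by
    intro ω l hω k hk
    rw [← sum_range_bstep l hk]
    congr 1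
    exact Finset.sum_congr rfl fun i hi =>
      cyl_mem_iff.mp hω i (lt_of_lt_of_le (Finset.mem_range.mp hi) hk)
  ext ω
  simp only [Set.mem_setOf_eq, Set.mem_iUnion, exists_prop]
  constructor
  · intro hZω
    rw [hZ ω] at hZω
    by_cases hSne : {n : ℕ | 1 + ∑ i ∈ Finset.range n, X i ω = 0}.Nonempty
    swap
    · rw [Set.not_nonempty_iff_eq_empty] at hSne
      rw [hSne] at hZω
      simp [Nat.sInf_empty] at hZω
    set N := sInf {n : ℕ | 1 + ∑ i ∈ Finset.range n, X i ω = 0} with hN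
    have hNS : 1 + ∑ i ∈ Finset.range N, X i ω = 0 := Nat.sInf_mem hSne
    have hNmin : ∀ k < N, ¬ (1 + ∑ i ∈ Finset.range k, X i ω = 0) := fun k hk =>
      Nat.notMem_of_lt_sInf hk
    set l : List Bool := (List.range N).map (fun i => decide (X i ω = 1)) with hl
    have hlen : l.length = N := by simp [hl]
    have hget : ∀ i < N, l.getD i true = decide (X i ω = 1) := by
      intro i hi
      rw [hl]
      rw [List.getD_eq_getElem _ true (by simpa using hi)]
      simp
    have hωcyl : ω ∈ cyl X l := by
      rw [cyl_mem_iff]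
      intro i hi
      rw [hget i (hlen ▸ hi)]
      exact hXb ω i
    have hFH : FirstHit l := by
      constructor
      · have h1 := hsum ω l hωcyl N hlen.ge
        rw [List.take_of_length_le hlen.le] at h1
        omega
      · intro k hk
        have h1 := hsum ω l hωcyl k (le_of_lt hk)
        have := hNmin k (by omega)
        omega
    have hcount : l.count true = m + 1 := by
      rw [hl, ← card_filter_range N (fun i => X i ω = 1)]
      exact hZω
    have hlen2 : l.length = 2 * (m + 1) + 1 := by
      have h2 := wsum_eq_count l
      have h3 := List.count_true_add_count_false l
      have h4 := hFH.1
      omega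
    exact ⟨l, mem_FHS.mpr ⟨hlen2, hFH⟩, hωcyl⟩
  · rintro ⟨l, hlF, hωcyl⟩
    obtain ⟨hlen, hFH⟩ := mem_FHS.mp hlF
    have hsum' := hsum ω l hωcyl
    have hNS : 1 + ∑ i ∈ Finset.range l.length, X i ω = 0 := by
      have h1 := hsum' l.length le_rfl
      rw [List.take_of_length_le le_rfl] at h1
      have := hFH.1
      omega
    have hInf : sInf {n : ℕ | 1 + ∑ i ∈ Finset.range n, X i ω = 0} = l.length := by
      apply _root_.le_antisymm (Nat.sInf_le hNS)
      by_contra hlt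
      push_neg at hlt
      have hmem := Nat.sInf_mem (⟨l.length, hNS⟩ :
        Set.Nonempty {n : ℕ | 1 + ∑ i ∈ Finset.range n, X i ω = 0})
      set k := sInf {n : ℕ | 1 + ∑ i ∈ Finset.range n, X i ω = 0}
      have h1 := hsum' k (le_of_lt hlt)
      simp only [Set.mem_setOf_eq] at hmem
      exact hFH.2 k hlt (by omega)
    rw [hZ ω, hInf, card_filter_range l.length (fun i => X i ω = 1)]
    have hmapeq : (List.range l.length).map (fun i => decide (X i ω = 1)) = l := by
      apply List.ext_getElem (by simp)
      intro i hi hi'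
      simp only [List.getElem_map, List.getElem_range]
      have h1 := cyl_mem_iff.mp hωcyl i hi'
      rw [List.getD_eq_getElem l true hi'] at h1
      rcases Bool.dichotomy l[i] with hb | hb <;> rw [hb] at h1 <;> simp [bstep] at h1 <;>
        simp [h1, hb]
    rw [hmapeq]
    exact (hFH.counts hlen).1

end Walk2

section Walk3

variable {Ω : Type*} [MeasurableSpace Ω] {μ : Measure Ω} [IsProbabilityMeasure μ]
  {ρ : ℝ} {X : ℕ → Ω → ℤ}

lemma meas_Z_eq (hmeas : ∀ i, Measurable (X i)) (hval : ∀ i ω, X i ω = 1 ∨ X i ω = -1)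
    (hindep : iIndepFun X μ)
    (hlaw : ∀ i, μ {ω | X i ω = 1} = ENNReal.ofReal ρ) (Z : Ω → ℕ)
    (hZ : ∀ ω, Z ω =
      ((Finset.range (sInf {n : ℕ | 1 + ∑ i ∈ Finset.range n, X i ω = 0})).filter
        (fun i => X i ω = 1)).card) (m : ℕ) :
    μ {ω | Z ω = m + 1} =
      (catalan (m + 1) : ℝ≥0∞) * ENNReal.ofReal ρ ^ (m + 1)
        * (1 - ENNReal.ofReal ρ) ^ (m + 2) := by
  rw [Z_eq_decomp hval Z hZ m]
  rw [measure_biUnion_finset ?hd fun l _ => measurableSet_cyl hmeas l]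
  case hd =>
    intro l hl l' hl' hne
    exact cyl_disjoint hval
      ((mem_FHS.mp hl).1.trans (mem_FHS.mp hl').1.symm) hne
  have hconst : ∀ l ∈ FHS (2 * (m + 1) + 1),
      μ (cyl X l) = ENNReal.ofReal ρ ^ (m + 1) * (1 - ENNReal.ofReal ρ) ^ (m + 2) := by
    intro l hl
    obtain ⟨hlen, hFH⟩ := mem_FHS.mp hl
    obtain ⟨hc1, hc2⟩ := hFH.counts hlen
    rw [meas_cyl hmeas hval hindep hlaw l, hc1, hc2]
  rw [Finset.sum_congr rfl hconst, Finset.sum_const, FHS_card (m + 1), nsmul_eq_mul, mul_assoc]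

lemma measurable_Z (hmeas : ∀ i, Measurable (X i)) (hval : ∀ i ω, X i ω = 1 ∨ X i ω = -1)
    (Z : Ω → ℕ)
    (hZ : ∀ ω, Z ω =
      ((Finset.range (sInf {n : ℕ | 1 + ∑ i ∈ Finset.range n, X i ω = 0})).filter
        (fun i => X i ω = 1)).card) :
    Measurable Z := by
  have hms : ∀ m : ℕ, MeasurableSet {ω | Z ω = m + 1} := by
    intro m
    rw [Z_eq_decomp hval Z hZ m]
    exact (FHS (2 * (m + 1) + 1)).measurableSet_biUnion fun l _ => measurableSet_cyl hmeas l
  apply measurable_to_countable'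
  intro n
  cases n with
  | zero =>
      have : Z ⁻¹' {0} = (⋃ m : ℕ, {ω | Z ω = m + 1})ᶜ := by
        ext ω
        simp only [Set.mem_preimage, Set.mem_singleton_iff, Set.mem_compl_iff, Set.mem_iUnion,
          Set.mem_setOf_eq]
        constructor
        · rintro h ⟨m, hm⟩; omega
        · intro h
          by_contra h0
          exact h ⟨Z ω - 1, by omega⟩
      rw [this]
      exact (MeasurableSet.iUnion fun m => hms m).compl
  | succ m =>
      have : Z ⁻¹' {m + 1} = {ω | Z ω = m + 1} := rfl
      rw [this]
      exact hms m

end Walk3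

lemma catalan_le_four_pow (n : ℕ) : catalan n ≤ 4 ^ n := by
  have h1 : (n + 1) * catalan n = Nat.centralBinom n := succ_mul_catalan_eq_centralBinom n
  have h2 : Nat.centralBinom n ≤ 4 ^ n := by
    have hle := Finset.single_le_sum (f := fun m => (2 * n).choose m)
      (fun i _ => Nat.zero_le _) (Finset.mem_range.mpr (show n < 2 * n + 1 by omega))
    rw [Nat.sum_range_choose] at hle
    calc Nat.centralBinom n = (2 * n).choose n := rfl
      _ ≤ 2 ^ (2 * n) := hle
      _ = 4 ^ n := by rw [pow_mul]; norm_num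
  calc catalan n ≤ (n + 1) * catalan n := Nat.le_mul_of_pos_left _ (by omega)
    _ = Nat.centralBinom n := h1
    _ ≤ 4 ^ n := h2

/-- The ℕ-factorial identity behind the series coefficients. -/
lemma factorial_catalan_identity (m : ℕ) :
    (m + 1) * catalan (m + 1) * (m.factorial * (m + 2).factorial)
      = (2 * (m + 1)).factorial := by
  have h1 : (m + 2) * catalan (m + 1) = Nat.centralBinom (m + 1) :=
    succ_mul_catalan_eq_centralBinom (m + 1)
  have h2 : (2 * (m + 1)).choose (m + 1) * (m + 1).factorial * (m + 1).factorial
      = (2 * (m + 1)).factorial := by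
    have := Nat.choose_mul_factorial_mul_factorial (n := 2 * (m + 1)) (k := m + 1) (by omega)
    rwa [show 2 * (m + 1) - (m + 1) = m + 1 by omega] at this
  rw [← h2]
  have h3 : (2 * (m + 1)).choose (m + 1) = Nat.centralBinom (m + 1) := rfl
  rw [h3, ← h1, Nat.factorial_succ (m + 1), Nat.factorial_succ m]
  ring

lemma series_term_eq (ρ : ℝ) (m : ℕ) :
    ((2 * (m + 1)).factorial : ℝ) / ((m.factorial : ℝ) * ((m + 2).factorial : ℝ)) *
        ρ ^ (m + 1) * (1 - ρ) ^ (m + 2)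
      = (((m + 1) * catalan (m + 1) : ℕ) : ℝ) * (ρ ^ (m + 1) * (1 - ρ) ^ (m + 2)) := by
  have h := factorial_catalan_identity m
  have h1 : (m.factorial : ℝ) ≠ 0 := Nat.cast_ne_zero.mpr m.factorial_ne_zero
  have h2 : ((m + 2).factorial : ℝ) ≠ 0 := Nat.cast_ne_zero.mpr (m + 2).factorial_ne_zero
  field_simp
  push_cast [← h]
  ring

lemma series_summable {ρ : ℝ} (h0 : 0 < ρ) (h1 : ρ < 1 / 2) :
    Summable (fun m : ℕ =>
      (((m + 1) * catalan (m + 1) : ℕ) : ℝ) * (ρ ^ (m + 1) * (1 - ρ) ^ (m + 2))) := by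
  set r : ℝ := 4 * (ρ * (1 - ρ)) with hr
  have hρ1 : 0 < 1 - ρ := by linarith
  have hr0 : 0 ≤ r := by positivity
  have hr1 : r < 1 := by nlinarith [sq_nonneg (1 - 2 * ρ)]
  have hgeom : Summable (fun m : ℕ => ((m + 1 : ℕ) : ℝ) * r ^ (m + 1)) := by
    have h := summable_pow_mul_geometric_of_norm_lt_one 1
      (by rwa [Real.norm_eq_abs, abs_of_nonneg hr0] : ‖r‖ < 1)
    have h' := (summable_nat_add_iff 1).mpr h
    simpa using h'
  apply Summable.of_nonneg_of_le (fun m => by positivity) (fun m => ?_) hgeom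
  have hcat : ((catalan (m + 1) : ℕ) : ℝ) ≤ (4 : ℝ) ^ (m + 1) := by
    calc ((catalan (m + 1) : ℕ) : ℝ) ≤ ((4 ^ (m + 1) : ℕ) : ℝ) := by
          exact_mod_cast catalan_le_four_pow (m + 1)
      _ = (4 : ℝ) ^ (m + 1) := by push_cast; ring
  have hb : (((m + 1) * catalan (m + 1) : ℕ) : ℝ) * (ρ ^ (m + 1) * (1 - ρ) ^ (m + 2))
      ≤ ((m + 1 : ℕ) : ℝ) * ((4 : ℝ) ^ (m + 1) * (ρ ^ (m + 1) * (1 - ρ) ^ (m + 1))) := by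
    have h2 : (1 - ρ) ^ (m + 2) ≤ (1 - ρ) ^ (m + 1) :=
      pow_le_pow_of_le_one (le_of_lt hρ1) (by linarith) (by omega)
    have key : ((catalan (m + 1) : ℕ) : ℝ) * (1 - ρ) ^ (m + 2)
        ≤ (4 : ℝ) ^ (m + 1) * (1 - ρ) ^ (m + 1) :=
      mul_le_mul hcat h2 (by positivity) (by positivity)
    push_cast
    calc ((m : ℝ) + 1) * ↑(catalan (m + 1)) * (ρ ^ (m + 1) * (1 - ρ) ^ (m + 2))
        = (((m : ℝ) + 1) * ρ ^ (m + 1)) * (↑(catalan (m + 1)) * (1 - ρ) ^ (m + 2)) := by ring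
      _ ≤ (((m : ℝ) + 1) * ρ ^ (m + 1)) * ((4 : ℝ) ^ (m + 1) * (1 - ρ) ^ (m + 1)) := by
          apply mul_le_mul_of_nonneg_left _ (by positivity)
          exact_mod_cast key
      _ = ((m : ℝ) + 1) * ((4 : ℝ) ^ (m + 1) * (ρ ^ (m + 1) * (1 - ρ) ^ (m + 1))) := by ring
  calc _ ≤ _ := hb
    _ = ((m + 1 : ℕ) : ℝ) * r ^ (m + 1) := by rw [hr, mul_pow, mul_pow]

section Walk4

open Filter Topology

variable {Ω : Type*} [MeasurableSpace Ω] {μ : Measure Ω} [IsProbabilityMeasure μ]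
  {ρ : ℝ} {X : ℕ → Ω → ℤ}

lemma hitting_as (h0 : 0 < ρ) (h1 : ρ < 1 / 2)
    (hmeas : ∀ i, Measurable (X i)) (hval : ∀ i ω, X i ω = 1 ∨ X i ω = -1)
    (hindep : iIndepFun X μ)
    (hlaw : ∀ i, μ {ω | X i ω = 1} = ENNReal.ofReal ρ) :
    μ {ω | ∃ n : ℕ, 1 + ∑ i ∈ Finset.range n, X i ω = 0} = 1 := by
  have mcast : Measurable (fun z : ℤ => (z : ℝ)) := measurable_from_top
  set Y : ℕ → Ω → ℝ := fun i ω => ((X i ω : ℤ) : ℝ) with hY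
  have hmeasY : ∀ i, Measurable (Y i) := fun i => mcast.comp (hmeas i)
  have hbound : ∀ i ω, ‖Y i ω‖ ≤ 1 := by
    intro i ω
    rcases hval i ω with h | h <;> simp [hY, h]
  have hint : Integrable (Y 0) μ := by
    apply Integrable.mono' (integrable_const (1 : ℝ)) (hmeasY 0).aestronglyMeasurable
    exact Filter.Eventually.of_forall (hbound 0)
  have hpair : Pairwise (Function.onFun (IndepFun · · μ) Y) := fun i j hij =>
    (hindep.indepFun hij).comp mcast mcast
  have hmapz : ∀ i, Measure.map (X i) μ = Measure.map (X 0) μ := by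
    intro i
    rw [Measure.ext_iff_singleton]
    intro z
    rw [Measure.map_apply (hmeas i) (measurableSet_singleton z),
      Measure.map_apply (hmeas 0) (measurableSet_singleton z)]
    by_cases hz1 : z = 1
    · subst hz1
      show μ {ω | X i ω = 1} = μ {ω | X 0 ω = 1}
      rw [hlaw i, hlaw 0]
    by_cases hz2 : z = -1
    · subst hz2
      show μ {ω | X i ω = -1} = μ {ω | X 0 ω = -1}
      rw [meas_eq_neg_one hmeas hval hlaw i, meas_eq_neg_one hmeas hval hlaw 0]
    · have he : ∀ j, X j ⁻¹' {z} = ∅ := by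
        intro j
        ext ω
        simp only [Set.mem_preimage, Set.mem_singleton_iff, Set.mem_empty_iff_false, iff_false]
        rcases hval j ω with h | h <;> rw [h] <;> omega
      rw [he i, he 0]
  have hident : ∀ i, IdentDistrib (Y i) (Y 0) μ μ := fun i =>
    IdentDistrib.comp ⟨(hmeas i).aemeasurable, (hmeas 0).aemeasurable, hmapz i⟩ mcast
  -- expectation of Y 0
  have hE : MeasurableSet {ω | X 0 ω = 1} := hmeas 0 (measurableSet_singleton 1)
  have hYeq : Y 0 = fun ω => Set.indicator {ω | X 0 ω = 1} (fun _ => (2 : ℝ)) ω - 1 := by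
    funext ω
    rcases hval 0 ω with h | h <;>
      simp [hY, h, Set.indicator_apply, Set.mem_setOf_eq] <;> norm_num
  have hEY : ∫ ω, Y 0 ω ∂μ = 2 * ρ - 1 := by
    rw [hYeq, integral_sub ((integrable_const (2 : ℝ)).indicator hE) (integrable_const 1),
      integral_indicator_const (2 : ℝ) hE, integral_const, measureReal_def, measureReal_def, hlaw 0, measure_univ,
      ENNReal.toReal_ofReal h0.le]
    simp [mul_comm]
  have hlln := strong_law_ae_real Y hint hpair hident
  have main : ∀ ω, Tendsto (fun n : ℕ => (∑ i ∈ Finset.range n, Y i ω) / n) atTop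
      (𝓝 (∫ ω, Y 0 ω ∂μ)) → (∃ n : ℕ, 1 + ∑ i ∈ Finset.range n, X i ω = 0) := by
    intro ω htend
    rw [hEY] at htend
    have hev := htend.eventually_lt_const (show 2 * ρ - 1 < 0 by linarith)
    obtain ⟨n, hn⟩ := (hev.and (eventually_ge_atTop 1)).exists
    have hn0 : (0 : ℝ) < (n : ℝ) := by
      have := hn.2; exact_mod_cast Nat.lt_of_lt_of_le Nat.zero_lt_one this
    have hsneg : (∑ i ∈ Finset.range n, Y i ω) < 0 := by
      have hlt := hn.1
      rw [div_neg_iff] at hlt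
      rcases hlt with ⟨_, h⟩ | ⟨h, _⟩
      · linarith
      · exact h
    have hZneg : (∑ i ∈ Finset.range n, X i ω) < 0 := by
      have : ((∑ i ∈ Finset.range n, X i ω : ℤ) : ℝ) < 0 := by push_cast; exact hsneg
      exact_mod_cast this
    obtain ⟨m, _, hm⟩ := exists_hit_of_nonpos (fun i => X i ω) (fun i => hval i ω)
      (n := n) (by show 1 + ∑ i ∈ Finset.range n, X i ω ≤ 0; omega)
    exact ⟨m, hm⟩
  have hae : ∀ᵐ ω ∂μ, ω ∈ {ω | ∃ n : ℕ, 1 + ∑ i ∈ Finset.range n, X i ω = 0} :=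
    hlln.mono fun ω h => main ω h
  have hc : μ {ω | ∃ n : ℕ, 1 + ∑ i ∈ Finset.range n, X i ω = 0}ᶜ = 0 := by
    simpa [Set.compl_setOf] using ae_iff.mp hae
  apply _root_.le_antisymm prob_le_one
  calc (1 : ℝ≥0∞) = μ Set.univ := measure_univ.symm
    _ ≤ μ {ω | ∃ n : ℕ, 1 + ∑ i ∈ Finset.range n, X i ω = 0}
        + μ {ω | ∃ n : ℕ, 1 + ∑ i ∈ Finset.range n, X i ω = 0}ᶜ := by
        rw [← Set.union_compl_self {ω | ∃ n : ℕ, 1 + ∑ i ∈ Finset.range n, X i ω = 0}]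
        exact measure_union_le _ _
    _ = μ {ω | ∃ n : ℕ, 1 + ∑ i ∈ Finset.range n, X i ω = 0} := by rw [hc, add_zero]

end Walk4

section Walk5

variable {Ω : Type*} [MeasurableSpace Ω] {μ : Measure Ω} [IsProbabilityMeasure μ]
  {ρ : ℝ} {X : ℕ → Ω → ℤ}

lemma lintegral_Z (h0 : 0 < ρ) (h1 : ρ < 1 / 2)
    (hmeas : ∀ i, Measurable (X i)) (hval : ∀ i ω, X i ω = 1 ∨ X i ω = -1)
    (hindep : iIndepFun X μ)
    (hlaw : ∀ i, μ {ω | X i ω = 1} = ENNReal.ofReal ρ) (Z : Ω → ℕ)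
    (hZ : ∀ ω, Z ω =
      ((Finset.range (sInf {n : ℕ | 1 + ∑ i ∈ Finset.range n, X i ω = 0})).filter
        (fun i => X i ω = 1)).card) :
    ∫⁻ ω, (Z ω : ℝ≥0∞) ∂μ
      = ENNReal.ofReal (∑' m : ℕ,
          (((m + 1) * catalan (m + 1) : ℕ) : ℝ) * (ρ ^ (m + 1) * (1 - ρ) ^ (m + 2))) := by
  have hmsets : ∀ m : ℕ, MeasurableSet {ω | Z ω = m + 1} := by
    intro m
    rw [Z_eq_decomp hval Z hZ m]
    exact (FHS (2 * (m + 1) + 1)).measurableSet_biUnion fun l _ => measurableSet_cyl hmeas l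
  have hfun : ∀ ω, (Z ω : ℝ≥0∞)
      = ∑' m : ℕ, Set.indicator {ω' | Z ω' = m + 1} (fun _ => ((m : ℝ≥0∞) + 1)) ω := by
    intro ω
    cases hz : Z ω with
    | zero =>
        symm
        simp only [Set.indicator_apply, Set.mem_setOf_eq, hz]
        simp
    | succ k =>
        rw [tsum_eq_single k ?hoff]
        · simp only [Set.indicator_apply, Set.mem_setOf_eq, hz, if_pos rfl]
          push_cast
          ring
        case hoff =>
          intro m hm
          simp only [Set.indicator_apply, Set.mem_setOf_eq, hz]
          rw [if_neg (by omega)]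
  have hsub : 1 - ENNReal.ofReal ρ = ENNReal.ofReal (1 - ρ) := by
    rw [ENNReal.ofReal_sub 1 h0.le, ENNReal.ofReal_one]
  have hnn : ∀ m : ℕ,
      (0 : ℝ) ≤ (((m + 1) * catalan (m + 1) : ℕ) : ℝ) * (ρ ^ (m + 1) * (1 - ρ) ^ (m + 2)) := by
    intro m
    have : (0 : ℝ) < 1 - ρ := by linarith
    positivity
  calc ∫⁻ ω, (Z ω : ℝ≥0∞) ∂μ
      = ∫⁻ ω, ∑' m : ℕ, Set.indicator {ω' | Z ω' = m + 1} (fun _ => ((m : ℝ≥0∞) + 1)) ω ∂μ :=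
        lintegral_congr hfun
    _ = ∑' m : ℕ, ∫⁻ ω, Set.indicator {ω' | Z ω' = m + 1} (fun _ => ((m : ℝ≥0∞) + 1)) ω ∂μ :=
        lintegral_tsum fun m => (measurable_const.indicator (hmsets m)).aemeasurable
    _ = ∑' m : ℕ, ((m : ℝ≥0∞) + 1) * μ {ω | Z ω = m + 1} := by
        refine tsum_congr fun m => ?_
        rw [lintegral_indicator_const (hmsets m)]
    _ = ∑' m : ℕ, ENNReal.ofReal
          ((((m + 1) * catalan (m + 1) : ℕ) : ℝ) * (ρ ^ (m + 1) * (1 - ρ) ^ (m + 2))) := by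
        refine tsum_congr fun m => ?_
        rw [meas_Z_eq hmeas hval hindep hlaw Z hZ m]
        rw [Nat.cast_mul, ENNReal.ofReal_mul (by positivity),
          ENNReal.ofReal_mul (by positivity), ENNReal.ofReal_natCast, ENNReal.ofReal_natCast,
          ENNReal.ofReal_mul (by positivity), ENNReal.ofReal_pow h0.le,
          ENNReal.ofReal_pow (by linarith), ← hsub]
        push_cast
        ring
    _ = ENNReal.ofReal (∑' m : ℕ,
          (((m + 1) * catalan (m + 1) : ℕ) : ℝ) * (ρ ^ (m + 1) * (1 - ρ) ^ (m + 2))) := by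
        rw [ENNReal.ofReal_tsum_of_nonneg hnn (series_summable h0 h1)]

end Walk5


/-- For the jump chain `S_n = 1 + ∑_{i<n} X_i` of a subcritical
birth-death excursion (`X_i` i.i.d. with values in `{-1,1}`,
`μ(X_i = 1) = ρ`, `0 < ρ < 1/2`), the hitting time `T = inf {n | S_n = 0}` is
almost surely finite, the number `Z` of birth events (indices `i < T` with
`X_i = 1`, which equals `(T-1)/2`) is integrable, and its expectation equals
`λ(ρ) = ∑_{ℓ=1}^∞ ((2ℓ)!/((ℓ-1)!(ℓ+1)!)) ρ^ℓ (1-ρ)^(ℓ+1)`. -/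
theorem expected_births_before_extinction
    {Ω : Type*} [MeasurableSpace Ω] (μ : Measure Ω) [IsProbabilityMeasure μ]
    (ρ : ℝ) (h0 : 0 < ρ) (h1 : ρ < 1 / 2)
    (X : ℕ → Ω → ℤ)
    (hmeas : ∀ i, Measurable (X i))
    (hval : ∀ i ω, X i ω = 1 ∨ X i ω = -1)
    (hindep : iIndepFun X μ)
    (hlaw : ∀ i, μ {ω | X i ω = 1} = ENNReal.ofReal ρ)
    (Z : Ω → ℕ)
    (hZ : ∀ ω, Z ω =
      ((Finset.range (sInf {n : ℕ | 1 + ∑ i ∈ Finset.range n, X i ω = 0})).filter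
        (fun i => X i ω = 1)).card) :
    μ {ω | ∃ n : ℕ, 1 + ∑ i ∈ Finset.range n, X i ω = 0} = 1 ∧
    Integrable (fun ω => (Z ω : ℝ)) μ ∧
    ∫ ω, (Z ω : ℝ) ∂μ =
      ∑' m : ℕ,
        ((2 * (m + 1)).factorial : ℝ) / ((m.factorial : ℝ) * ((m + 2).factorial : ℝ)) *
          ρ ^ (m + 1) * (1 - ρ) ^ (m + 2) := by
  have hZmeas : Measurable Z := measurable_Z hmeas hval Z hZ
  have hZRmeas : Measurable (fun ω => (Z ω : ℝ)) := measurable_from_top.comp hZmeas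
  have hL := lintegral_Z h0 h1 hmeas hval hindep hlaw Z hZ
  set C : ℝ := ∑' m : ℕ,
    (((m + 1) * catalan (m + 1) : ℕ) : ℝ) * (ρ ^ (m + 1) * (1 - ρ) ^ (m + 2)) with hC
  have hρ' : (0 : ℝ) < 1 - ρ := by linarith
  have hCnn : 0 ≤ C := tsum_nonneg fun m => by positivity
  have hint : Integrable (fun ω => (Z ω : ℝ)) μ := by
    refine ⟨hZRmeas.aestronglyMeasurable, ?_⟩
    have heq : ∫⁻ ω, ‖(Z ω : ℝ)‖ₑ ∂μ = ∫⁻ ω, (Z ω : ℝ≥0∞) ∂μ :=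
      lintegral_congr fun ω => by simp
    unfold HasFiniteIntegral
    change ∫⁻ ω, ‖(Z ω : ℝ)‖ₑ ∂μ < ∞
    rw [heq, hL]
    exact ENNReal.ofReal_lt_top
  refine ⟨hitting_as h0 h1 hmeas hval hindep hlaw, hint, ?_⟩
  rw [integral_eq_lintegral_of_nonneg_ae
    (Filter.Eventually.of_forall fun ω => by positivity) hZRmeas.aestronglyMeasurable]
  have hof : ∫⁻ ω, ENNReal.ofReal ((Z ω : ℝ)) ∂μ = ENNReal.ofReal C := by
    rw [← hL]
    exact lintegral_congr fun ω => by rw [ENNReal.ofReal_natCast]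
  rw [hof, ENNReal.toReal_ofReal hCnn, hC]
  exact (tsum_congr fun m => series_term_eq ρ m).symm
end

section
/- Let V be a finite type, E : V → V → Prop a directed edge relation, and for v,w ∈ V let d(v,w) ∈ ℕ ∪ {∞} be the directed graph distance and d(𝐯,w) = min_{v∈𝐯} d(v,w) for 𝐯 ⊆ V. Let α > 0 be real, 𝐯 ⊆ V nonempty, and f : V → ℝ satisfy f(v) = 0 for all v ∈ 𝐯 and f(u) < 0 for all u ∉ 𝐯 with d(𝐯,u) < α. Then for every w ∈ V and every t ≥ 0, the maximum over all u ∈ V with d(𝐯,u) < α of the positive part ((1 − d(𝐯,u)/α) + t·f(u) − d(u,w)/α)₊ (where a term with d(u,w) = ∞ is taken to be 0) equals (1 − d(𝐯,w)/α)₊ (taken to be 0 when d(𝐯,w) = ∞). -/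
/-- `γ : Fin (n+1) → V` is a directed path in the graph with edge relation `E`. -/
def IsDirPath {V : Type*} (E : V → V → Prop) (n : ℕ) (γ : Fin (n + 1) → V) : Prop :=
  ∀ i : Fin n, E (γ i.castSucc) (γ i.succ)

/-- Directed graph distance from a set `vs` to a vertex `w`: the minimal length
of a directed path from `vs` to `w` (`⊤` if there is none). -/
noncomputable def dirDist {V : Type*} (E : V → V → Prop) (vs : Set V) (w : V) : ℕ∞ :=
  sInf {N : ℕ∞ | ∃ (n : ℕ) (γ : Fin (n + 1) → V),
    N = (n : ℕ∞) ∧ γ 0 ∈ vs ∧ γ (Fin.last n) = w ∧ IsDirPath E n γ}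

section Aux

variable {V : Type*} {E : V → V → Prop}

private lemma concat_path {n m : ℕ} {γ : Fin (n+1) → V} {δ : Fin (m+1) → V}
    (hγ : IsDirPath E n γ) (hδ : IsDirPath E m δ)
    (hmid : γ (Fin.last n) = δ 0) :
    ∃ η : Fin (n+m+1) → V, η 0 = γ 0 ∧ η (Fin.last (n+m)) = δ (Fin.last m) ∧
      IsDirPath E (n+m) η := by
  refine ⟨fun i => if h : (i : ℕ) ≤ n then γ ⟨i, by omega⟩
    else δ ⟨(i:ℕ) - n, by have := i.isLt; omega⟩, ?_, ?_, ?_⟩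
  · simp
  · by_cases hm : m = 0
    · subst hm
      simp only [Fin.val_last, Nat.add_zero, le_refl, dif_pos]
      rw [show (⟨n, by omega⟩ : Fin (n+1)) = Fin.last n from rfl, hmid]
      rfl
    · have h1 : ¬ ((Fin.last (n+m) : ℕ) ≤ n) := by simp [Fin.val_last]; omega
      dsimp only
      rw [dif_neg h1]
      congr 1
      ext
      simp only [Fin.val_last]; omega
  · intro i
    have hi := i.isLt
    by_cases h1 : (i : ℕ) < n
    · have hc : ((i.castSucc : Fin (n+m+1)) : ℕ) = i := rfl
      have hs : ((i.succ : Fin (n+m+1)) : ℕ) = i + 1 := rfl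
      dsimp only
      rw [dif_pos (by omega : ((i.castSucc : Fin (n+m+1)) : ℕ) ≤ n),
          dif_pos (by rw [hs]; omega)]
      have := hγ ⟨i, h1⟩
      convert this using 2 <;> ext <;> simp [hc, hs]
    · have hs : ((i.succ : Fin (n+m+1)) : ℕ) = i + 1 := rfl
      have hcast : ∀ (j : Fin (n+m+1)) (hj : n ≤ (j:ℕ)),
          (if h : (j : ℕ) ≤ n then γ ⟨j, by omega⟩
            else δ ⟨(j:ℕ) - n, by have := j.isLt; omega⟩)
            = δ ⟨(j:ℕ) - n, by have := j.isLt; omega⟩ := by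
        intro j hj
        by_cases h : (j:ℕ) ≤ n
        · have hjn : (j:ℕ) = n := le_antisymm h hj
          rw [dif_pos h]
          have : (⟨(j:ℕ), by omega⟩ : Fin (n+1)) = Fin.last n := by ext; simp [hjn]
          rw [this, hmid]
          congr 1
          ext; simp [hjn]
        · rw [dif_neg h]
      dsimp only
      rw [hcast i.castSucc (by simpa using not_lt.mp h1),
          hcast i.succ (by rw [hs]; omega)]
      have h2 : (i:ℕ) - n < m := by omega
      have := hδ ⟨(i:ℕ) - n, h2⟩
      convert this using 2 <;> ext <;> simp [hs] <;> omega

private lemma dirDist_le {vs : Set V} {w : V} (n : ℕ) (γ : Fin (n+1) → V)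
    (h0 : γ 0 ∈ vs) (hl : γ (Fin.last n) = w) (hp : IsDirPath E n γ) :
    dirDist E vs w ≤ (n : ℕ∞) :=
  sInf_le ⟨n, γ, rfl, h0, hl, hp⟩

private lemma dirDist_mem_zero {vs : Set V} {v : V} (hv : v ∈ vs) :
    dirDist E vs v = 0 := by
  refine le_antisymm ?_ zero_le
  simpa using dirDist_le (E := E) 0 (fun _ => v) hv rfl (fun i => absurd i.isLt (by omega))

private lemma dirDist_exists_path {vs : Set V} {w : V} (h : dirDist E vs w ≠ ⊤) :
    ∃ (n : ℕ) (γ : Fin (n + 1) → V), (n : ℕ∞) = dirDist E vs w ∧ γ 0 ∈ vs ∧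
      γ (Fin.last n) = w ∧ IsDirPath E n γ := by
  have hne : {N : ℕ∞ | ∃ (n : ℕ) (γ : Fin (n + 1) → V),
      N = (n : ℕ∞) ∧ γ 0 ∈ vs ∧ γ (Fin.last n) = w ∧ IsDirPath E n γ}.Nonempty := by
    by_contra hne
    rw [Set.not_nonempty_iff_eq_empty] at hne
    apply h
    simp only [dirDist, hne, sInf_empty]
  have hmem := csInf_mem hne
  obtain ⟨n, γ, hN, h0, hl, hp⟩ := hmem
  exact ⟨n, γ, hN.symm, h0, hl, hp⟩

private lemma dirDist_triangle {vs : Set V} {u w : V}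
    (hu : dirDist E vs u ≠ ⊤) (huw : dirDist E {u} w ≠ ⊤) :
    dirDist E vs w ≤ dirDist E vs u + dirDist E {u} w := by
  obtain ⟨n, γ, hn, h0, hl, hp⟩ := dirDist_exists_path hu
  obtain ⟨m, δ, hm, h0', hl', hp'⟩ := dirDist_exists_path huw
  obtain ⟨η, he0, hel, hep⟩ := concat_path hp hp' (by rw [hl]; exact h0'.symm)
  have := dirDist_le (E := E) (vs := vs) (n + m) η (he0 ▸ h0) (by rw [hel, hl']) hep
  calc dirDist E vs w ≤ ((n + m : ℕ) : ℕ∞) := this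
    _ = (n : ℕ∞) + (m : ℕ∞) := by push_cast; ring
    _ = dirDist E vs u + dirDist E {u} w := by rw [hn, hm]

end Aux

open Classical in
/-- an ESC is a fixed point of the `ln K`-dynamics.  Let `vs` be
the resident traits, `α > 0`, and `f` the invasion fitness, vanishing on `vs`
and negative for all non-resident traits within distance `α` of `vs`.  Then for
every trait `w` and every `t ≥ 0`, the maximum over all `u` with
`d(vs,u) < α` of `((1 - d(vs,u)/α) + t·f(u) - d(u,w)/α)₊` (a term with
`d(u,w) = ∞` being `0`) equals `(1 - d(vs,w)/α)₊` (being `0` when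
`d(vs,w) = ∞`). -/
theorem esc_fixed_point_of_logK_dynamics {V : Type*} [Fintype V]
    (E : V → V → Prop) (vs : Set V) (hvs : vs.Nonempty)
    (α : ℝ) (hα : 0 < α) (f : V → ℝ)
    (hf0 : ∀ v ∈ vs, f v = 0)
    (hneg : ∀ u, u ∉ vs → dirDist E vs u ≠ ⊤ →
      ((dirDist E vs u).toNat : ℝ) < α → f u < 0)
    (w : V) (t : ℝ) (ht : 0 ≤ t) :
    (⨆ u : V,
      if dirDist E vs u ≠ ⊤ ∧ ((dirDist E vs u).toNat : ℝ) < α then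
        (if dirDist E {u} w = ⊤ then 0 else
          max ((1 - ((dirDist E vs u).toNat : ℝ) / α) + t * f u -
               ((dirDist E {u} w).toNat : ℝ) / α) 0)
      else 0) =
    (if dirDist E vs w = ⊤ then 0 else
      max (1 - ((dirDist E vs w).toNat : ℝ) / α) 0) := by
  obtain ⟨v₀, hv₀⟩ := hvs
  have hV : Nonempty V := ⟨v₀⟩
  set g : V → ℝ := fun u =>
    if dirDist E vs u ≠ ⊤ ∧ ((dirDist E vs u).toNat : ℝ) < α then
      (if dirDist E {u} w = ⊤ then 0 else
        max ((1 - ((dirDist E vs u).toNat : ℝ) / α) + t * f u -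
             ((dirDist E {u} w).toNat : ℝ) / α) 0)
    else 0 with hg
  set R : ℝ := if dirDist E vs w = ⊤ then 0 else
      max (1 - ((dirDist E vs w).toNat : ℝ) / α) 0 with hR
  have hgnonneg : ∀ u, 0 ≤ g u := by
    intro u
    rw [hg]
    dsimp only
    split_ifs <;> simp
  have hRnonneg : 0 ≤ R := by
    rw [hR]; split_ifs <;> simp
  have hfle : ∀ u, dirDist E vs u ≠ ⊤ → ((dirDist E vs u).toNat : ℝ) < α → f u ≤ 0 := by
    intro u h1 h2
    by_cases hu : u ∈ vs
    · exact le_of_eq (hf0 u hu)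
    · exact le_of_lt (hneg u hu h1 h2)
  apply le_antisymm
  · -- upper bound: each term ≤ R
    apply ciSup_le
    intro u
    rw [hg]
    dsimp only
    split_ifs with h1 h2
    · -- D u finite < α, d(u,w) = ⊤
      exact hRnonneg
    · -- D u finite < α, d(u,w) finite
      obtain ⟨hDu, hDuα⟩ := h1
      apply max_le _ hRnonneg
      -- triangle
      have htri := dirDist_triangle hDu h2
      have hDw : dirDist E vs w ≠ ⊤ := by
        intro hT
        rw [hT, top_le_iff, ENat.add_eq_top] at htri
        tauto
      set A : ℕ := (dirDist E vs u).toNat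
      set B : ℕ := (dirDist E {u} w).toNat
      set C : ℕ := (dirDist E vs w).toNat
      have hAB : (C : ℕ∞) ≤ (A : ℕ∞) + (B : ℕ∞) := by
        rw [ENat.coe_toNat hDu, ENat.coe_toNat h2, ENat.coe_toNat hDw]
        exact htri
      have hABn : C ≤ A + B := by exact_mod_cast hAB
      have hABr : (C : ℝ) ≤ (A : ℝ) + (B : ℝ) := by exact_mod_cast hABn
      have htf : t * f u ≤ 0 :=
        mul_nonpos_of_nonneg_of_nonpos ht (hfle u hDu hDuα)
      have h3 : 1 - (A : ℝ) / α + t * f u - (B : ℝ) / α ≤ 1 - (C : ℝ) / α := by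
        have hdiv : (C : ℝ) / α ≤ ((A : ℝ) + (B : ℝ)) / α := by gcongr
        have hsplit : ((A : ℝ) + (B : ℝ)) / α = (A : ℝ) / α + (B : ℝ) / α :=
          add_div _ _ _
        linarith
      rw [hR, if_neg hDw]
      calc 1 - (A : ℝ) / α + t * f u - (B : ℝ) / α ≤ 1 - (C : ℝ) / α := h3
        _ ≤ max (1 - (C : ℝ) / α) 0 := le_max_left _ _
    · exact hRnonneg
  · -- lower bound
    have hbdd : BddAbove (Set.range g) := Set.Finite.bddAbove (Set.finite_range g)
    by_cases hDw : dirDist E vs w = ⊤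
    · rw [hR, if_pos hDw]
      exact le_trans (hgnonneg v₀) (le_ciSup hbdd v₀)
    · -- take the start of a minimal path from vs to w
      obtain ⟨n, γ, hn, h0, hl, hp⟩ := dirDist_exists_path hDw
      set u : V := γ 0 with hu
      have hu0 : dirDist E vs u = 0 := dirDist_mem_zero h0
      have huw : dirDist E {u} w ≤ (n : ℕ∞) :=
        dirDist_le n γ rfl hl hp
      have huwT : dirDist E {u} w ≠ ⊤ := by
        intro hT; rw [hT] at huw; exact absurd (top_le_iff.mp huw) (by simp)
      have hB : ((dirDist E {u} w).toNat : ℕ∞) ≤ (n : ℕ∞) := by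
        rw [ENat.coe_toNat huwT]; exact huw
      have hBn : (dirDist E {u} w).toNat ≤ n := by exact_mod_cast hB
      have hC : (dirDist E vs w).toNat = n := by
        have := hn.symm
        rw [this]; simp
      have hcond : dirDist E vs u ≠ ⊤ ∧ ((dirDist E vs u).toNat : ℝ) < α := by
        constructor
        · rw [hu0]; simp
        · rw [hu0]; simpa using hα
      have hgu : g u = max ((1 - ((dirDist E vs u).toNat : ℝ) / α) + t * f u -
          ((dirDist E {u} w).toNat : ℝ) / α) 0 := by
        rw [hg]; dsimp only; rw [if_pos hcond, if_neg huwT]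
      have hfu : f u = 0 := hf0 u h0
      have key : R ≤ g u := by
        rw [hR, if_neg hDw, hgu, hu0, hfu, hC]
        simp only [ENat.toNat_zero, Nat.cast_zero, zero_div, sub_zero, mul_zero, add_zero]
        apply max_le_max_right
        have : ((dirDist E {u} w).toNat : ℝ) ≤ (n : ℝ) := by exact_mod_cast hBn
        have h4 : ((dirDist E {u} w).toNat : ℝ) / α ≤ (n : ℝ) / α := by gcongr
        linarith
      exact le_trans key (le_ciSup hbdd u)
end
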